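/- Let t, a, b, p ∈ ℂ with t ≠ 0, and let c be the braiding of type R_{1,1} on V = ℂ³ with parameters t, a, b, p. Then the kernel of id_{V⊗V} + c is nonzero if and only if t² = 1. (Since the degree-2 part of the defining ideal of the Nichols algebra of (V, c) equals ker(id + c), this says the Nichols algebra has quadratic relations if and only if t² = 1.) -/

import Mathlib

/-! The braiding squares to `t² • id`, which one checks on the basis `xᵢ ⊗ xⱼ`. Hence an eigenvector
of `c` with eigenvalue `-1` forces `t² = 1`. Conversely, for `t = 1` the vector `x₂ ⊗ x₁ - x₁ ⊗ x₂`,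
and for `t = -1` the vector `x₁ ⊗ x₁`, lies in the kernel of `id + c`. -/

open TensorProduct

/-- `V = ℂ³`. -/
abbrev V3 : Type := Fin 3 → ℂ

/-- The standard basis vectors `x₁ = xv 0`, `x₂ = xv 1`, `x₃ = xv 2` of `ℂ³`. -/
noncomputable def xv (i : Fin 3) : V3 := Pi.single i 1

theorem LinearMap.eq_one_of_comp_self_eq_smul_id_of_ker_id_add_ne_bot {R M : Type*} [CommRing R]
    [AddCommGroup M] [Module R M] [NoZeroSMulDivisors R M] {f : M →ₗ[R] M} {s : R}
    (hf : f ∘ₗ f = s • LinearMap.id) (hker : LinearMap.ker (LinearMap.id + f) ≠ ⊥) : s = 1 := by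
  obtain ⟨v, hv, hv0⟩ := (Submodule.ne_bot_iff _).mp hker
  have hfv : f v = -v := eq_neg_of_add_eq_zero_right hv
  have hsv : s • v = v := by
    simpa [hfv] using (LinearMap.congr_fun hf v).symm
  have hs1 : (s - 1) • v = 0 := by rw [sub_smul, one_smul, hsv, sub_self]
  exact sub_eq_zero.mp ((eq_zero_or_eq_zero_of_smul_eq_zero hs1).resolve_right hv0)

noncomputable def tensorBasisV3 : Module.Basis (Fin 3 × Fin 3) ℂ (V3 ⊗[ℂ] V3) :=
  (Pi.basisFun ℂ (Fin 3)).tensorProduct (Pi.basisFun ℂ (Fin 3))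

theorem tensorBasisV3_apply (i j : Fin 3) : tensorBasisV3 (i, j) = xv i ⊗ₜ[ℂ] xv j := by
  rw [tensorBasisV3, Module.Basis.tensorProduct_apply, Pi.basisFun_apply, Pi.basisFun_apply]
  rfl

structure IsBraidingR11 (t a b p : ℂ) (c : V3 ⊗[ℂ] V3 →ₗ[ℂ] V3 ⊗[ℂ] V3) : Prop where
  apply_11 : c (xv 0 ⊗ₜ[ℂ] xv 0) = t • (xv 0 ⊗ₜ[ℂ] xv 0)
  apply_21 : c (xv 1 ⊗ₜ[ℂ] xv 0) = t • (xv 0 ⊗ₜ[ℂ] xv 1)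
  apply_31 : c (xv 2 ⊗ₜ[ℂ] xv 0) = t • (xv 0 ⊗ₜ[ℂ] xv 2) + (t * a) • (xv 0 ⊗ₜ[ℂ] xv 0)
  apply_12 : c (xv 0 ⊗ₜ[ℂ] xv 1) = t • (xv 1 ⊗ₜ[ℂ] xv 0)
  apply_22 : c (xv 1 ⊗ₜ[ℂ] xv 1) = t • (xv 1 ⊗ₜ[ℂ] xv 1)
  apply_32 : c (xv 2 ⊗ₜ[ℂ] xv 1) = t • (xv 1 ⊗ₜ[ℂ] xv 2) + (t * a) • (xv 1 ⊗ₜ[ℂ] xv 0)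
    + (t * (a - b)) • (xv 0 ⊗ₜ[ℂ] xv 1)
  apply_13 : c (xv 0 ⊗ₜ[ℂ] xv 2) = t • (xv 2 ⊗ₜ[ℂ] xv 0) - (t * a) • (xv 0 ⊗ₜ[ℂ] xv 0)
  apply_23 : c (xv 1 ⊗ₜ[ℂ] xv 2) = t • (xv 2 ⊗ₜ[ℂ] xv 1) + (t * (b - a)) • (xv 1 ⊗ₜ[ℂ] xv 0)
    - (t * a) • (xv 0 ⊗ₜ[ℂ] xv 1)
  apply_33 : c (xv 2 ⊗ₜ[ℂ] xv 2) = t • (xv 2 ⊗ₜ[ℂ] xv 2) + (t * b) • (xv 2 ⊗ₜ[ℂ] xv 0)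
    - (t * p) • (xv 1 ⊗ₜ[ℂ] xv 0) - (t * b) • (xv 0 ⊗ₜ[ℂ] xv 2)
    + (t * p) • (xv 0 ⊗ₜ[ℂ] xv 1) - (t * a * b) • (xv 0 ⊗ₜ[ℂ] xv 0)

namespace IsBraidingR11

variable {t a b p : ℂ} {c : V3 ⊗[ℂ] V3 →ₗ[ℂ] V3 ⊗[ℂ] V3}

theorem comp_self (hc : IsBraidingR11 t a b p c) : c ∘ₗ c = t ^ 2 • LinearMap.id := by
  refine tensorBasisV3.ext fun ⟨i, j⟩ => ?_
  rw [tensorBasisV3_apply]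
  obtain ⟨h11, h21, h31, h12, h22, h32, h13, h23, h33⟩ := hc
  fin_cases i <;> fin_cases j <;>
    simp only [Fin.zero_eta, Fin.mk_one, Fin.reduceFinMk, Fin.isValue, LinearMap.comp_apply,
      LinearMap.smul_apply, LinearMap.id_apply, map_add, map_sub, map_smul,
      h11, h21, h31, h12, h22, h32, h13, h23, h33] <;>
    module

theorem antisymm_mem_ker (hc : IsBraidingR11 1 a b p c) :
    xv 1 ⊗ₜ[ℂ] xv 0 - xv 0 ⊗ₜ[ℂ] xv 1 ∈ LinearMap.ker (LinearMap.id + c) := by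
  rw [LinearMap.mem_ker, LinearMap.add_apply, LinearMap.id_apply, map_sub, hc.apply_21,
    hc.apply_12]
  module

theorem diag_mem_ker (hc : IsBraidingR11 (-1) a b p c) :
    xv 0 ⊗ₜ[ℂ] xv 0 ∈ LinearMap.ker (LinearMap.id + c) := by
  rw [LinearMap.mem_ker, LinearMap.add_apply, LinearMap.id_apply, hc.apply_11]
  module

end IsBraidingR11

theorem quadratic_relations_R11_iff (t a b p : ℂ)
    (c : V3 ⊗[ℂ] V3 →ₗ[ℂ] V3 ⊗[ℂ] V3)
    (h11 : c (xv 0 ⊗ₜ[ℂ] xv 0) = t • (xv 0 ⊗ₜ[ℂ] xv 0))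
    (h21 : c (xv 1 ⊗ₜ[ℂ] xv 0) = t • (xv 0 ⊗ₜ[ℂ] xv 1))
    (h31 : c (xv 2 ⊗ₜ[ℂ] xv 0) = t • (xv 0 ⊗ₜ[ℂ] xv 2) + (t * a) • (xv 0 ⊗ₜ[ℂ] xv 0))
    (h12 : c (xv 0 ⊗ₜ[ℂ] xv 1) = t • (xv 1 ⊗ₜ[ℂ] xv 0))
    (h22 : c (xv 1 ⊗ₜ[ℂ] xv 1) = t • (xv 1 ⊗ₜ[ℂ] xv 1))
    (h32 : c (xv 2 ⊗ₜ[ℂ] xv 1) = t • (xv 1 ⊗ₜ[ℂ] xv 2) + (t * a) • (xv 1 ⊗ₜ[ℂ] xv 0)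
      + (t * (a - b)) • (xv 0 ⊗ₜ[ℂ] xv 1))
    (h13 : c (xv 0 ⊗ₜ[ℂ] xv 2) = t • (xv 2 ⊗ₜ[ℂ] xv 0) - (t * a) • (xv 0 ⊗ₜ[ℂ] xv 0))
    (h23 : c (xv 1 ⊗ₜ[ℂ] xv 2) = t • (xv 2 ⊗ₜ[ℂ] xv 1) + (t * (b - a)) • (xv 1 ⊗ₜ[ℂ] xv 0)
      - (t * a) • (xv 0 ⊗ₜ[ℂ] xv 1))
    (h33 : c (xv 2 ⊗ₜ[ℂ] xv 2) = t • (xv 2 ⊗ₜ[ℂ] xv 2) + (t * b) • (xv 2 ⊗ₜ[ℂ] xv 0)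
      - (t * p) • (xv 1 ⊗ₜ[ℂ] xv 0) - (t * b) • (xv 0 ⊗ₜ[ℂ] xv 2)
      + (t * p) • (xv 0 ⊗ₜ[ℂ] xv 1) - (t * a * b) • (xv 0 ⊗ₜ[ℂ] xv 0)) :
    LinearMap.ker (LinearMap.id + c) ≠ ⊥ ↔ t ^ 2 = 1 := by
  have hc : IsBraidingR11 t a b p c := ⟨h11, h21, h31, h12, h22, h32, h13, h23, h33⟩
  refine ⟨LinearMap.eq_one_of_comp_self_eq_smul_id_of_ker_id_add_ne_bot hc.comp_self, fun ht => ?_⟩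
  rw [Submodule.ne_bot_iff]
  rcases sq_eq_one_iff.mp ht with rfl | rfl
  · refine ⟨_, hc.antisymm_mem_ker, sub_ne_zero.mpr ?_⟩
    have h10 : ((1 : Fin 3), (0 : Fin 3)) ≠ (0, 1) := by decide
    simpa only [tensorBasisV3_apply] using tensorBasisV3.injective.ne h10
  · refine ⟨_, hc.diag_mem_ker, ?_⟩
    simpa only [tensorBasisV3_apply] using tensorBasisV3.ne_zero (0, 0)
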